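/- If T is an increasing shifted tableau such that row(T) is an FPF-involution word, then every entry on the main diagonal of T is an even number. -/

import Mathlib

/-- The function underlying the permutation `Θ = (12)(34)(56)⋯` on positive integers
(fixing `0`). -/
def thetaFun (n : ℕ) : ℕ :=
  if n = 0 then 0 else if n % 2 = 1 then n + 1 else n - 1

lemma thetaFun_involutive : Function.Involutive thetaFun := by
  intro n
  by_cases h0 : n = 0
  · simp [thetaFun, h0]
  · by_cases h1 : n % 2 = 1
    · have e1 : thetaFun n = n + 1 := by simp [thetaFun, h0, h1]
      have h2 : ¬ ((n + 1) % 2 = 1) := by omega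
      have h3 : ¬ (n + 1 = 0) := by omega
      rw [e1]
      simp only [thetaFun, if_neg h3, if_neg h2]
      omega
    · have e1 : thetaFun n = n - 1 := by simp [thetaFun, h0, h1]
      have h2 : (n - 1) % 2 = 1 := by omega
      have h3 : ¬ (n - 1 = 0) := by omega
      rw [e1]
      simp only [thetaFun, if_neg h3, if_pos h2]
      omega

/-- The fixed-point-free involution `Θ = (12)(34)(56)⋯`. -/
def theta : Equiv.Perm ℕ := Function.Involutive.toPerm thetaFun thetaFun_involutive

/-- The simple transposition `s_i = (i, i+1)`. -/
def sPerm (i : ℕ) : Equiv.Perm ℕ := Equiv.swap i (i + 1)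

/-- For a word `w = i₁i₂⋯i_l`, the permutation `s_{i_l}⋯s_{i₁} Θ s_{i₁}⋯s_{i_l}`. -/
def heckeConj (w : List ℕ) : Equiv.Perm ℕ :=
  ((w.map sPerm).reverse).prod * theta * (w.map sPerm).prod

/-- `w` is a symplectic Hecke word for `z`, i.e. a word of positive letters with
`z = s_{i_l}⋯s_{i₁} Θ s_{i₁}⋯s_{i_l}`. -/
def SympHecke (z : Equiv.Perm ℕ) (w : List ℕ) : Prop :=
  (∀ i ∈ w, 1 ≤ i) ∧ z = heckeConj w

/-- `z` belongs to `F_∞`, the conjugacy set `{π⁻¹ Θ π : π ∈ S_∞}`. -/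
def InFinf (z : Equiv.Perm ℕ) : Prop := ∃ w : List ℕ, SympHecke z w

/-- `w` is an FPF-involution word for `z`: a symplectic Hecke word for `z` of minimal
length among all symplectic Hecke words for `z`. -/
def IsFPFWordFor (z : Equiv.Perm ℕ) (w : List ℕ) : Prop :=
  SympHecke z w ∧ ∀ w' : List ℕ, SympHecke z w' → w.length ≤ w'.length

/-- `w` is an FPF-involution word (for the element it determines). -/
def IsFPFWord (w : List ℕ) : Prop := IsFPFWordFor (heckeConj w) w
/-- A shifted tableau, given as its list of rows (top to bottom); row `i` (0-indexed)
implicitly occupies absolute columns `i, i+1, …`. -/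
abbrev Tab := List (List ℕ)

/-- Replace row `i` of `T` by `r`, creating a new row if `i = T.length`. -/
def updRow (T : Tab) (i : ℕ) (r : List ℕ) : Tab :=
  if i < T.length then T.set i r else T ++ [r]

/-- The entries of absolute column `c` of `T`, from top to bottom. -/
def colList (T : Tab) (c : ℕ) : List ℕ :=
  (List.range (c + 1)).filterMap (fun i => (T[i]?).bind (fun r => r[c - i]?))

mutual
/-- `InsRow T i a T' pos pr`: the row-insertion phase of FPF-involution Coxeter-Knuth
insertion, inserting the letter `a` into row `i` of `T`, eventually producing the
tableau `T'` with new box at position `pos` (row, absolute column), `pr = true` iff the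
insertion terminated with a column insertion. -/
inductive InsRow : Tab → ℕ → ℕ → Tab → ℕ × ℕ → Bool → Prop
  | append (T : Tab) (i a : ℕ) (r : List ℕ) :
      r = T.getD i [] →
      r.dropWhile (fun x => decide (x < a)) = [] →
      InsRow T i a (updRow T i (r ++ [a])) (i, i + r.length) false
  | equal (T : Tab) (i a : ℕ) (rest : List ℕ) (T' : Tab) (pos : ℕ × ℕ) (pr : Bool) :
      (T.getD i []).dropWhile (fun x => decide (x < a)) = a :: rest →
      InsRow T (i+1) (a+1) T' pos pr →
      InsRow T i a T' pos pr
  | parity (T : Tab) (i a b : ℕ) (rest : List ℕ) (T' : Tab) (pos : ℕ × ℕ) (pr : Bool) :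
      (T.getD i []).takeWhile (fun x => decide (x < a)) = [] →
      (T.getD i []).dropWhile (fun x => decide (x < a)) = b :: rest →
      a < b → a % 2 ≠ b % 2 →
      InsCol T (i+1) (a+2) T' pos pr →
      InsRow T i a T' pos pr
  | bumpRow (T : Tab) (i a b : ℕ) (pre rest : List ℕ) (T' : Tab) (pos : ℕ × ℕ) (pr : Bool) :
      pre = (T.getD i []).takeWhile (fun x => decide (x < a)) →
      (T.getD i []).dropWhile (fun x => decide (x < a)) = b :: rest →
      a < b → pre ≠ [] →
      InsRow (T.set i (pre ++ a :: rest)) (i+1) b T' pos pr →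
      InsRow T i a T' pos pr
  | bumpDiag (T : Tab) (i a b : ℕ) (rest : List ℕ) (T' : Tab) (pos : ℕ × ℕ) (pr : Bool) :
      (T.getD i []).takeWhile (fun x => decide (x < a)) = [] →
      (T.getD i []).dropWhile (fun x => decide (x < a)) = b :: rest →
      a < b → a % 2 = b % 2 →
      InsCol (T.set i (a :: rest)) (i+1) b T' pos pr →
      InsRow T i a T' pos pr

/-- `InsCol T c x T' pos pr`: the column-insertion phase, inserting `x` into the
absolute column `c` of `T`. -/
inductive InsCol : Tab → ℕ → ℕ → Tab → ℕ × ℕ → Bool → Prop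
  | append (T : Tab) (c x k : ℕ) :
      (colList T c).dropWhile (fun y => decide (y < x)) = [] →
      k = (colList T c).length →
      (T.getD k []).length = c - k →
      k ≤ c →
      InsCol T c x (updRow T k ((T.getD k []) ++ [x])) (k, c) true
  | equal (T : Tab) (c x : ℕ) (rest : List ℕ) (T' : Tab) (pos : ℕ × ℕ) (pr : Bool) :
      (colList T c).dropWhile (fun y => decide (y < x)) = x :: rest →
      InsCol T (c+1) (x+1) T' pos pr →
      InsCol T c x T' pos pr
  | bump (T : Tab) (c x b k : ℕ) (rest : List ℕ) (T' : Tab) (pos : ℕ × ℕ) (pr : Bool) :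
      (colList T c).dropWhile (fun y => decide (y < x)) = b :: rest →
      x < b →
      k = ((colList T c).takeWhile (fun y => decide (y < x))).length →
      InsCol (T.set k ((T.getD k []).set (c - k) x)) (c+1) b T' pos pr →
      InsCol T c x T' pos pr
end

/-- Insertion of a word, letter by letter, each letter starting at the first row.
`InsWord T w T'` means `T ← w = T'`. -/
inductive InsWord : Tab → List ℕ → Tab → Prop
  | nil (T : Tab) : InsWord T [] T
  | cons (T T₁ T₂ : Tab) (a : ℕ) (w : List ℕ) (pos : ℕ × ℕ) (pr : Bool) :
      InsRow T 0 a T₁ pos pr → InsWord T₁ w T₂ → InsWord T (a :: w) T₂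

/-- A recording tableau: each box carries a label together with a primed flag. -/
abbrev RTab := List (List (ℕ × Bool))

/-- Replace row `i` of a recording tableau, creating a new row if needed. -/
def updRowR (Q : RTab) (i : ℕ) (r : List (ℕ × Bool)) : RTab :=
  if i < Q.length then Q.set i r else Q ++ [r]

/-- `InsWordRec T Q k w T' Q'`: insertion of the word `w` starting from the pair
`(T, Q)` with next label `k`, recording label `k` (primed iff the insertion of the
letter terminated with a column insertion) in the new box. -/
inductive InsWordRec : Tab → RTab → ℕ → List ℕ → Tab → RTab → Prop
  | nil (T : Tab) (Q : RTab) (k : ℕ) : InsWordRec T Q k [] T Q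
  | cons (T T₁ T₂ : Tab) (Q Q₂ : RTab) (k a i j : ℕ) (w : List ℕ) (pr : Bool) :
      InsRow T 0 a T₁ (i, j) pr →
      InsWordRec T₁ (updRowR Q i ((Q.getD i []) ++ [(k, pr)])) (k+1) w T₂ Q₂ →
      InsWordRec T Q k (a :: w) T₂ Q₂

/-- `T` is an increasing shifted tableau (with positive entries). -/
def IsIncreasingTab (T : Tab) : Prop :=
  (∀ r ∈ T, r ≠ []) ∧
  List.Chain' (fun r s : List ℕ => s.length < r.length) T ∧
  (∀ r ∈ T, List.Chain' (· < ·) r) ∧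
  (∀ r ∈ T, ∀ x ∈ r, 1 ≤ x) ∧
  (∀ i k x y, (T.getD (i+1) [])[k]? = some x →
      (T.getD i [])[k+1]? = some y → y < x)

/-- The row reading word of `T`: rows from bottom to top, each left to right. -/
def rowWord (T : Tab) : List ℕ := T.reverse.flatten

/-! If a diagonal entry `d` of `T` were odd, then `s_d` would commute with `Θ`. Every letter
read before that `d` in `row(T)` lies in a lower row and is therefore at least `d + 2`, so `s_d`
also commutes with the corresponding transpositions. Deleting this `d` from `row(T)` then gives
a shorter symplectic Hecke word for the same involution, contradicting minimality. -/

lemma commute_sPerm_theta {d : ℕ} (hd : d % 2 = 1) : Commute (sPerm d) theta := by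
  ext n
  simp only [Equiv.Perm.mul_apply, sPerm, theta, Function.Involutive.coe_toPerm,
    Equiv.swap_apply_def, thetaFun]
  split_ifs <;> first | contradiction | omega

lemma commute_sPerm_sPerm_of_add_two_le {a b : ℕ} (h : a + 2 ≤ b) :
    Commute (sPerm a) (sPerm b) := by
  ext n
  simp only [Equiv.Perm.mul_apply, sPerm, Equiv.swap_apply_def]
  split_ifs <;> first | contradiction | omega

lemma heckeConj_append_cons_of_odd {u v : List ℕ} {d : ℕ} (hd : d % 2 = 1)
    (hu : ∀ x ∈ u, d + 2 ≤ x) : heckeConj (u ++ d :: v) = heckeConj (u ++ v) := by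
  have hS : ∀ p ∈ u.map sPerm, Commute (sPerm d) p := by
    simp only [List.mem_map]
    rintro _ ⟨x, hx, rfl⟩
    exact commute_sPerm_sPerm_of_add_two_le (hu x hx)
  have hU := Commute.list_prod_right _ _ hS
  have hU' := Commute.list_prod_right _ _ fun p hp => hS p (List.mem_reverse.mp hp)
  have hθ : sPerm d * theta * sPerm d = theta := by
    rw [(commute_sPerm_theta hd).eq, mul_assoc, sPerm, Equiv.swap_mul_self, mul_one]
  simp only [heckeConj, List.map_append, List.map_cons, List.reverse_append,
    List.reverse_cons, List.prod_append, List.prod_cons, List.append_assoc,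
    List.singleton_append]
  rw [hU'.eq, ← mul_assoc _ (sPerm d), ← hU.eq]
  simp only [mul_assoc]
  rw [← mul_assoc theta (sPerm d), ← mul_assoc (sPerm d), ← mul_assoc (sPerm d) theta, hθ]

lemma IsFPFWord.even_of_forall_add_two_le {u v : List ℕ} {d : ℕ} (h : IsFPFWord (u ++ d :: v))
    (hu : ∀ x ∈ u, d + 2 ≤ x) : Even d := by
  obtain ⟨⟨hpos, -⟩, hmin⟩ := h
  rw [Nat.even_iff]
  by_contra hodd
  have hshorter : SympHecke (heckeConj (u ++ d :: v)) (u ++ v) :=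
    ⟨fun x hx => hpos x (by simp only [List.mem_append, List.mem_cons] at hx ⊢; tauto),
      heckeConj_append_cons_of_odd (by omega) hu⟩
  simpa using hmin _ hshorter

lemma List.lt_length_of_mem_getD {α : Type*} {T : List (List α)} {j : ℕ} {x : α}
    (hx : x ∈ T.getD j []) : j < T.length := by
  by_contra h
  rw [List.getD_eq_default _ _ (not_lt.mp h)] at hx
  exact List.not_mem_nil hx

lemma rowWord_append_cons (A B : Tab) (r : List ℕ) :
    rowWord (A ++ r :: B) = rowWord B ++ r ++ rowWord A := by
  simp [rowWord]

lemma exists_rowWord_eq_drop_append_cons {T : Tab} {i d : ℕ} (hd : (T.getD i [])[0]? = some d) :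
    ∃ v, rowWord T = rowWord (T.drop (i + 1)) ++ d :: v := by
  have hi : i < T.length := List.lt_length_of_mem_getD (List.mem_of_getElem? hd)
  obtain ⟨t, ht⟩ : ∃ t, T[i] = d :: t := by
    rw [List.getD_eq_getElem _ _ hi] at hd
    exact ⟨T[i].tail, (List.cons_head?_tail (List.head?_eq_getElem? ▸ hd)).symm⟩
  refine ⟨t ++ rowWord (T.take i), ?_⟩
  conv_lhs => rw [← List.take_append_drop i T, List.drop_eq_getElem_cons hi, ht,
    rowWord_append_cons]
  simp

lemma exists_lt_of_mem_rowWord_drop {T : Tab} {i x : ℕ} (hx : x ∈ rowWord (T.drop (i + 1))) :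
    ∃ j, i < j ∧ x ∈ T.getD j [] := by
  obtain ⟨r, hr, hxr⟩ := List.mem_flatten.mp hx
  obtain ⟨k, hk, rfl⟩ := List.mem_iff_getElem.mp (List.mem_reverse.mp hr)
  refine ⟨i + 1 + k, by omega, ?_⟩
  rwa [List.getElem_drop, ← List.getD_eq_getElem] at hxr

namespace IsIncreasingTab

variable {T : Tab}

lemma length_getD_succ_lt (hT : IsIncreasingTab T) {j : ℕ} (hj : j + 1 < T.length) :
    (T.getD (j + 1) []).length < (T.getD j []).length := by
  rw [List.getD_eq_getElem _ _ hj, List.getD_eq_getElem _ _ (by omega)]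
  exact List.isChain_iff_getElem.mp hT.2.1 j hj

lemma isChain_getD (hT : IsIncreasingTab T) (j : ℕ) : List.IsChain (· < ·) (T.getD j []) := by
  rcases lt_or_ge j T.length with hj | hj
  · rw [List.getD_eq_getElem _ _ hj]
    exact hT.2.2.1 _ (List.getElem_mem hj)
  · rw [List.getD_eq_default _ _ hj]
    exact List.isChain_nil

lemma head_le_of_mem (hT : IsIncreasingTab T) {j e x : ℕ} (he : (T.getD j [])[0]? = some e)
    (hx : x ∈ T.getD j []) : e ≤ x := by
  have hchain := hT.isChain_getD j
  obtain ⟨a, s, hs⟩ := List.exists_cons_of_ne_nil (List.ne_nil_of_mem hx)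
  rw [hs, List.isChain_iff_pairwise, List.pairwise_cons] at hchain
  rw [hs] at he hx
  obtain rfl : a = e := by simpa using he
  rcases List.mem_cons.mp hx with rfl | hx
  · exact le_rfl
  · exact (hchain.1 x hx).le

/-- In a shifted diagram the first box of row `j + 1` lies below the second box of row `j`. -/
lemma head_add_two_le_of_mem_succ (hT : IsIncreasingTab T) {j e x : ℕ}
    (he : (T.getD j [])[0]? = some e) (hx : x ∈ T.getD (j + 1) []) : e + 2 ≤ x := by
  have hlen : 1 < (T.getD j []).length := by
    have := hT.length_getD_succ_lt (List.lt_length_of_mem_getD hx)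
    have := List.length_pos_of_mem hx
    omega
  obtain ⟨a, ha⟩ : ∃ a, (T.getD (j + 1) [])[0]? = some a :=
    ⟨_, List.getElem?_eq_getElem (List.length_pos_of_mem hx)⟩
  obtain ⟨_, rfl⟩ := List.getElem?_eq_some_iff.mp he
  have hey : (T.getD j [])[0] < (T.getD j [])[1] :=
    List.isChain_iff_getElem.mp (hT.isChain_getD j) 0 hlen
  have hya := hT.2.2.2.2 j 0 a _ ha (List.getElem?_eq_getElem hlen)
  have hax : a ≤ x := hT.head_le_of_mem ha hx
  omega

lemma add_two_le_of_mem_of_lt (hT : IsIncreasingTab T) {i j d x : ℕ}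
    (hd : (T.getD i [])[0]? = some d) (hij : i < j) (hx : x ∈ T.getD j []) : d + 2 ≤ x := by
  induction j, hij using Nat.le_induction generalizing x with
  | base => exact hT.head_add_two_le_of_mem_succ hd hx
  | succ j hij ih =>
    obtain ⟨e, he⟩ : ∃ e, (T.getD j [])[0]? = some e := by
      have := hT.length_getD_succ_lt (List.lt_length_of_mem_getD hx)
      exact ⟨_, List.getElem?_eq_getElem (by omega)⟩
    have hde := ih (List.mem_of_getElem? he)
    have hex := hT.head_add_two_le_of_mem_succ he hx
    omega

end IsIncreasingTab

/-- If `T` is an increasing shifted tableau whose row reading word is an FPF-involution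
word, then every entry on the main diagonal of `T` (the first entry of each row) is
even. -/
theorem diagonal_entries_even (T : Tab) (hT : IsIncreasingTab T)
    (h : IsFPFWord (rowWord T)) :
    ∀ i d, (T.getD i [])[0]? = some d → Even d := by
  intro i d hd
  obtain ⟨v, hw⟩ := exists_rowWord_eq_drop_append_cons hd
  rw [hw] at h
  refine h.even_of_forall_add_two_le fun x hx => ?_
  obtain ⟨j, hij, hxj⟩ := exists_lt_of_mem_rowWord_drop hx
  exact hT.add_two_le_of_mem_of_lt hd hij hxj
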